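/- arXiv:2003.08681 — 4 statements merged into one kernel-verified Lean document; each statement's English description precedes it below -/
import Mathlib

section
/- Existence of OR and AND gates for the classical chip-firing automaton: there exist T ≥ 1, finitely supported configurations c_OR, c_AND : ℤ × ℤ → ℕ, and for each of them three pairwise distinct cells i₁, i₂, o with the output cell o initially holding 0 chips, such that for every pair of Booleans (b₁, b₂), iterating the classical step at most T times from the configuration obtained by adding 4·[b₁] chips at i₁ and 4·[b₂] chips at i₂, the output cell o of c_OR becomes positive at some time step t ≤ T if and only if b₁ ∨ b₂ is true, and the output cell o of c_AND becomes positive at some time step t ≤ T if and only if b₁ ∧ b₂ is true. -/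
/-- The H-step of the fungal sandpile automaton: every cell with at least 4 chips
loses 2 chips and sends one chip to each of its two horizontal neighbours. -/
def Hstep (c : ℤ × ℤ → ℕ) : ℤ × ℤ → ℕ := fun v =>
  c v - 2 * (if 4 ≤ c v then 1 else 0)
    + (if 4 ≤ c (v - (1, 0)) then 1 else 0)
    + (if 4 ≤ c (v + (1, 0)) then 1 else 0)

/-- The V-step: analogous with the vertical neighbours. -/
def Vstep (c : ℤ × ℤ → ℕ) : ℤ × ℤ → ℕ := fun v =>
  c v - 2 * (if 4 ≤ c v then 1 else 0)
    + (if 4 ≤ c (v - (0, 1)) then 1 else 0)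
    + (if 4 ≤ c (v + (0, 1)) then 1 else 0)

inductive Letter | H | V
  deriving DecidableEq

/-- The step associated to a letter. -/
def Letter.step : Letter → (ℤ × ℤ → ℕ) → (ℤ × ℤ → ℕ)
  | .H => Hstep
  | .V => Vstep

/-- Apply the steps of a word in order (head first). -/
def runWord : List Letter → (ℤ × ℤ → ℕ) → (ℤ × ℤ → ℕ)
  | [], c => c
  | l :: ls, c => runWord ls (l.step c)

/-- Run the automaton `t` steps with the word `w` repeated periodically. -/
def runPeriodic (w : List Letter) (c : ℤ × ℤ → ℕ) : ℕ → (ℤ × ℤ → ℕ)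
  | 0 => c
  | t + 1 => (w.getD (t % w.length) Letter.H).step (runPeriodic w c t)

/-- One chip at `u`, zero elsewhere. -/
def delta (u : ℤ × ℤ) : ℤ × ℤ → ℕ := fun v => if v = u then 1 else 0

/-- Numerical value of a Boolean. -/
def bnum (b : Bool) : ℕ := if b then 1 else 0

/-- The word V⁴H⁴. -/
def wV4H4 : List Letter := [.V, .V, .V, .V, .H, .H, .H, .H]

/-- The classical chip-firing step: every cell with at least 4 chips loses 4
chips and sends one chip to each of its four von Neumann neighbours. -/
def Cstep (c : ℤ × ℤ → ℕ) : ℤ × ℤ → ℕ := fun v =>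
  c v - 4 * (if 4 ≤ c v then 1 else 0)
    + (if 4 ≤ c (v - (1, 0)) then 1 else 0)
    + (if 4 ≤ c (v + (1, 0)) then 1 else 0)
    + (if 4 ≤ c (v - (0, 1)) then 1 else 0)
    + (if 4 ≤ c (v + (0, 1)) then 1 else 0)

/-- Existence of OR and AND gates for the classical chip-firing automaton. -/
theorem or_and_gates_classical :
    ∃ (T : ℕ) (cOR cAND : ℤ × ℤ → ℕ)
      (i₁ i₂ o j₁ j₂ p : ℤ × ℤ),
      1 ≤ T ∧ (Function.support cOR).Finite ∧ (Function.support cAND).Finite ∧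
      i₁ ≠ i₂ ∧ i₁ ≠ o ∧ i₂ ≠ o ∧ cOR o = 0 ∧
      j₁ ≠ j₂ ∧ j₁ ≠ p ∧ j₂ ≠ p ∧ cAND p = 0 ∧
      ∀ b₁ b₂ : Bool,
        ((∃ t ≤ T, 0 < Cstep^[t]
            (fun v => cOR v + 4 * bnum b₁ * delta i₁ v + 4 * bnum b₂ * delta i₂ v) o)
          ↔ (b₁ || b₂) = true) ∧
        ((∃ t ≤ T, 0 < Cstep^[t]
            (fun v => cAND v + 4 * bnum b₁ * delta j₁ v + 4 * bnum b₂ * delta j₂ v) p)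
          ↔ (b₁ && b₂) = true) := by
  refine ⟨2, (fun _ => 0), (fun v => if v = ((0 : ℤ), (0 : ℤ)) then 2 else 0),
    (-1, 0), (1, 0), (0, 0), (-1, 0), (1, 0), (0, 1),
    one_le_two, by simp, ?_, by decide, by decide, by decide, rfl,
    by decide, by decide, by decide, by norm_num, ?_⟩
  · exact (Set.finite_singleton ((0 : ℤ), (0 : ℤ))).subset fun v hv => by
      by_contra h; exact hv (if_neg h)
  · intro b₁ b₂
    cases b₁ <;> cases b₂ <;> refine ⟨?_, ?_⟩ <;>
      simp only [Bool.or_self, Bool.or_true, Bool.true_or, Bool.and_self,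
        Bool.and_true, Bool.true_and, Bool.and_false, Bool.false_and,
        Bool.false_or, Bool.or_false, Bool.false_eq_true, iff_true, iff_false]
    · rintro ⟨t, ht, h⟩
      interval_cases t <;>
        norm_num [Cstep, delta, bnum, Function.iterate_succ_apply', Prod.ext_iff] at h
    · rintro ⟨t, ht, h⟩
      interval_cases t <;>
        norm_num [Cstep, delta, bnum, Function.iterate_succ_apply', Prod.ext_iff] at h
    · exact ⟨1, one_le_two, by norm_num [Cstep, delta, bnum, Prod.ext_iff]⟩
    · rintro ⟨t, ht, h⟩
      interval_cases t <;>
        norm_num [Cstep, delta, bnum, Function.iterate_succ_apply', Prod.ext_iff] at h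
    · exact ⟨1, one_le_two, by norm_num [Cstep, delta, bnum, Prod.ext_iff]⟩
    · rintro ⟨t, ht, h⟩
      interval_cases t <;>
        norm_num [Cstep, delta, bnum, Function.iterate_succ_apply', Prod.ext_iff] at h
    · exact ⟨1, one_le_two, by norm_num [Cstep, delta, bnum, Prod.ext_iff]⟩
    · exact ⟨2, le_refl 2, by
        norm_num [Cstep, delta, bnum, Function.iterate_succ_apply', Prod.ext_iff]⟩
end

section
/- Existence of an OR gate for the word H²V²: there exist T ≥ 1, a finitely supported configuration c : ℤ × ℤ → ℕ, and three pairwise distinct cells i₁, i₂, o with c(o) = 0, such that for every pair of Booleans (b₁, b₂), if the automaton is run with the word H²V² repeated periodically, starting from the configuration c + 4·[b₁]·δ_{i₁} + 4·[b₂]·δ_{i₂}, then the cell o holds a positive number of chips at some time step t ≤ T if and only if b₁ ∨ b₂ is true. -/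
/-- Existence of an OR gate for the word H²V². -/
theorem or_gate_H2V2 :
    ∃ (T : ℕ) (c : ℤ × ℤ → ℕ) (i₁ i₂ o : ℤ × ℤ),
      1 ≤ T ∧ (Function.support c).Finite ∧
      i₁ ≠ i₂ ∧ i₁ ≠ o ∧ i₂ ≠ o ∧ c o = 0 ∧
      ∀ b₁ b₂ : Bool,
        (∃ t ≤ T, 0 < runPeriodic [Letter.H, Letter.H, Letter.V, Letter.V]
            (fun v => c v + 4 * bnum b₁ * delta i₁ v + 4 * bnum b₂ * delta i₂ v) t o)
        ↔ (b₁ || b₂) = true := by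
  classical
  refine ⟨1, (fun _ => 0), (-1, 0), (1, 0), (0, 0), le_refl 1, ?_, by decide, by decide,
    by decide, rfl, ?_⟩
  · simp
  · have hzero : ∀ t, runPeriodic [Letter.H, Letter.H, Letter.V, Letter.V]
        (fun _ => 0) t = (fun _ => 0) := by
      intro t
      induction t with
      | zero => rfl
      | succ t ih =>
        rw [runPeriodic, ih]
        cases h : ([Letter.H, Letter.H, Letter.V, Letter.V].getD
            (t % [Letter.H, Letter.H, Letter.V, Letter.V].length) Letter.H) <;>
          funext v <;> simp [Letter.step, Hstep, Vstep]
    intro b₁ b₂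
    cases b₁ <;> cases b₂ <;> simp [bnum]
    · intro t ht
      exact congrFun (hzero t) (0, 0)
    · exact ⟨1, le_refl 1, by norm_num [runPeriodic, Letter.step, Hstep, delta]⟩
    · exact ⟨1, le_refl 1, by norm_num [runPeriodic, Letter.step, Hstep, delta]⟩
    · exact ⟨1, le_refl 1, by norm_num [runPeriodic, Letter.step, Hstep, delta]⟩
end

section
/- Existence of an AND gate for the word H²V²: there exist T ≥ 1, a finitely supported configuration c : ℤ × ℤ → ℕ, and three pairwise distinct cells i₁, i₂, o with c(o) = 0, such that for every pair of Booleans (b₁, b₂), if the automaton is run with the word H²V² repeated periodically, starting from the configuration c + 4·[b₁]·δ_{i₁} + 4·[b₂]·δ_{i₂}, then the cell o holds a positive number of chips at some time step t ≤ T if and only if b₁ ∧ b₂ is true. -/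
/-- Existence of an AND gate for the word H²V². -/
theorem and_gate_H2V2 :
    ∃ (T : ℕ) (c : ℤ × ℤ → ℕ) (i₁ i₂ o : ℤ × ℤ),
      1 ≤ T ∧ (Function.support c).Finite ∧
      i₁ ≠ i₂ ∧ i₁ ≠ o ∧ i₂ ≠ o ∧ c o = 0 ∧
      ∀ b₁ b₂ : Bool,
        (∃ t ≤ T, 0 < runPeriodic [Letter.H, Letter.H, Letter.V, Letter.V]
            (fun v => c v + 4 * bnum b₁ * delta i₁ v + 4 * bnum b₂ * delta i₂ v) t o)
        ↔ (b₁ && b₂) = true := by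
  refine ⟨3,
    (fun v => if v = (-1, 0) then 3 else if v = (1, 0) then 3 else if v = (0, 0) then 2 else 0),
    (-2, 0), (2, 0), (0, 1), by norm_num, ?_,
    by norm_num [Prod.ext_iff], by norm_num [Prod.ext_iff], by norm_num [Prod.ext_iff],
    by norm_num [Prod.ext_iff], ?_⟩
  · refine Set.Finite.subset (Set.toFinite ({(-1, 0), (1, 0), (0, 0)} : Set (ℤ × ℤ))) ?_
    intro v hv
    simp only [Function.mem_support] at hv
    by_contra h
    simp only [Set.mem_insert_iff, Set.mem_singleton_iff, not_or] at h
    simp [h.1, h.2.1, h.2.2] at hv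
  · intro b₁ b₂
    cases b₁ <;> cases b₂
    · refine iff_of_false ?_ (by simp)
      rintro ⟨t, ht, hpos⟩
      interval_cases t <;>
        norm_num [runPeriodic, Letter.step, Hstep, Vstep, bnum, delta, Prod.ext_iff] at hpos
    · refine iff_of_false ?_ (by simp)
      rintro ⟨t, ht, hpos⟩
      interval_cases t <;>
        norm_num [runPeriodic, Letter.step, Hstep, Vstep, bnum, delta, Prod.ext_iff] at hpos
    · refine iff_of_false ?_ (by simp)
      rintro ⟨t, ht, hpos⟩
      interval_cases t <;>
        norm_num [runPeriodic, Letter.step, Hstep, Vstep, bnum, delta, Prod.ext_iff] at hpos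
    · refine iff_of_true ⟨3, by norm_num, ?_⟩ rfl
      norm_num [runPeriodic, Letter.step, Hstep, Vstep, bnum, delta, Prod.ext_iff]
end

section
/- Existence of an AND gate in the threshold-2 variant: there exist a nonempty word w ∈ {H,V}⁺, T ≥ 1, a finitely supported configuration c : ℤ × ℤ → ℕ, and three pairwise distinct cells i₁, i₂, o with c(o) = 0, such that for every pair of Booleans (b₁, b₂), if the threshold-2 automaton is run with the word w repeated periodically, starting from the configuration c + 2·[b₁]·δ_{i₁} + 2·[b₂]·δ_{i₂}, then the cell o holds a positive number of chips at some time step t ≤ T if and only if b₁ ∧ b₂ is true. -/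
/-- The H-step in the threshold-2 variant. -/
def H2step (c : ℤ × ℤ → ℕ) : ℤ × ℤ → ℕ := fun v =>
  c v - 2 * (if 2 ≤ c v then 1 else 0)
    + (if 2 ≤ c (v - (1, 0)) then 1 else 0)
    + (if 2 ≤ c (v + (1, 0)) then 1 else 0)

/-- The V-step in the threshold-2 variant. -/
def V2step (c : ℤ × ℤ → ℕ) : ℤ × ℤ → ℕ := fun v =>
  c v - 2 * (if 2 ≤ c v then 1 else 0)
    + (if 2 ≤ c (v - (0, 1)) then 1 else 0)
    + (if 2 ≤ c (v + (0, 1)) then 1 else 0)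

/-- The threshold-2 step associated to a letter. -/
def Letter.step2 : Letter → (ℤ × ℤ → ℕ) → (ℤ × ℤ → ℕ)
  | .H => H2step
  | .V => V2step

/-- Apply the threshold-2 steps of a word in order. -/
def runWord2 : List Letter → (ℤ × ℤ → ℕ) → (ℤ × ℤ → ℕ)
  | [], c => c
  | l :: ls, c => runWord2 ls (l.step2 c)

/-- Run the threshold-2 automaton `t` steps with `w` repeated periodically. -/
def runPeriodic2 (w : List Letter) (c : ℤ × ℤ → ℕ) : ℕ → (ℤ × ℤ → ℕ)
  | 0 => c
  | t + 1 => (w.getD (t % w.length) Letter.H).step2 (runPeriodic2 w c t)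

/-- Existence of an AND gate in the threshold-2 variant. -/
theorem and_gate_threshold2 :
    ∃ (w : List Letter) (T : ℕ) (c : ℤ × ℤ → ℕ) (i₁ i₂ o : ℤ × ℤ),
      w ≠ [] ∧ 1 ≤ T ∧ (Function.support c).Finite ∧
      i₁ ≠ i₂ ∧ i₁ ≠ o ∧ i₂ ≠ o ∧ c o = 0 ∧
      ∀ b₁ b₂ : Bool,
        (∃ t ≤ T, 0 < runPeriodic2 w
            (fun v => c v + 2 * bnum b₁ * delta i₁ v + 2 * bnum b₂ * delta i₂ v) t o)
        ↔ (b₁ && b₂) = true := by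
  refine ⟨[.H, .V], 2, (fun _ => 0), ((0:ℤ),(0:ℤ)), ((2:ℤ),(0:ℤ)), ((1:ℤ),(1:ℤ)),
    (by simp), one_le_two, (by simp [Function.support]), (by decide), (by decide), (by decide), rfl, ?_⟩
  intro b₁ b₂
  cases b₁ <;> cases b₂ <;>
    simp only [Bool.and_false, Bool.false_and, Bool.and_true, Bool.true_and,
      Bool.false_eq_true, iff_false, iff_true]
  · rintro ⟨t, ht, hpos⟩
    interval_cases t <;>
      norm_num [runPeriodic2, Letter.step2, H2step, V2step, bnum, delta, Prod.ext_iff] at hpos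
  · rintro ⟨t, ht, hpos⟩
    interval_cases t <;>
      norm_num [runPeriodic2, Letter.step2, H2step, V2step, bnum, delta, Prod.ext_iff] at hpos
  · rintro ⟨t, ht, hpos⟩
    interval_cases t <;>
      norm_num [runPeriodic2, Letter.step2, H2step, V2step, bnum, delta, Prod.ext_iff] at hpos
  · refine ⟨2, le_refl 2, ?_⟩
    norm_num [runPeriodic2, Letter.step2, H2step, V2step, bnum, delta, Prod.ext_iff]
end
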